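/- arXiv:2503.10425 — 7 statements merged into one kernel-verified Lean document; each statement's English description precedes it below -/
import Mathlib

section
/- Let G be a finite group, p a prime, P a Sylow p-subgroup of G, and x an element of P. If x is picky (i.e., x belongs to a unique Sylow p-subgroup of G), then the normalizer of ⟨x⟩ in G is contained in the normalizer of P in G. -/
open scoped Pointwise in
theorem Subgroup.le_conj_smul_of_le_of_mem_normalizer {G : Type*} [Group G] {H K : Subgroup G}
    {g : G} (hHK : H ≤ K) (hg : g ∈ normalizer (H : Set G)) : H ≤ MulAut.conj g • K := by
  rw [pointwise_smul_def, ← mem_normalizer_iff_map_conj_eq.mp hg]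
  exact map_mono hHK

theorem stmt_0_general {G : Type*} [Group G] {p : ℕ}
    (P : Sylow p G) (x : G) (hx : x ∈ P)
    (hpicky : ∀ Q : Sylow p G, x ∈ Q → Q = P) :
    Subgroup.normalizer ((Subgroup.zpowers x : Subgroup G) : Set G) ≤ Subgroup.normalizer ((P : Subgroup G) : Set G) := by
  intro g hg
  refine Sylow.smul_eq_iff_mem_normalizer.mp (hpicky _ ?_)
  exact Subgroup.le_conj_smul_of_le_of_mem_normalizer (Subgroup.zpowers_le.mpr hx) hg
    (Subgroup.mem_zpowers x)

theorem stmt_0 {G : Type*} [Group G] [Fintype G] {p : ℕ} (hp : p.Prime)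
    (P : Sylow p G) (x : G) (hx : x ∈ P)
    (hpicky : ∀ Q : Sylow p G, x ∈ Q → Q = P) :
    Subgroup.normalizer ((Subgroup.zpowers x : Subgroup G) : Set G) ≤ Subgroup.normalizer ((P : Subgroup G) : Set G) :=
  stmt_0_general P x hx hpicky
end

section
/- Let G be a finite group, p a prime, P a Sylow p-subgroup of G, and x ∈ P. If both P and the centralizer of x in G are abelian, then x belongs to a unique Sylow p-subgroup of G. -/
/-!
Sylow subgroups are conjugate, so every Sylow `p`-subgroup `Q` containing `x` is abelian like `P`,
hence lies in the centralizer of `x`. In that abelian group every Sylow `p`-subgroup is normal,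
hence unique, so `Q = P`.
-/

theorem Sylow.isMulCommutative {G : Type*} [Group G] {p : ℕ} [Fact p.Prime] [Finite (Sylow p G)]
    (P Q : Sylow p G) [IsMulCommutative (P : Subgroup G)] : IsMulCommutative (Q : Subgroup G) :=
  ⟨⟨fun a b => (P.equiv Q).symm.injective (by rw [map_mul, map_mul, mul_comm'])⟩⟩

theorem Subgroup.le_centralizer_singleton {G : Type*} [Group G] {H : Subgroup G}
    [IsMulCommutative H] {x : G} (hx : x ∈ H) : H ≤ centralizer {x} :=
  (le_centralizer (H := H)).trans (centralizer_le (Set.singleton_subset_iff.2 hx))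

theorem Sylow.eq_of_le_of_isMulCommutative {G : Type*} [Group G] {p : ℕ} [Fact p.Prime]
    {H : Subgroup G} [IsMulCommutative H] [Finite (Sylow p H)] {P Q : Sylow p G}
    (hP : P ≤ H) (hQ : Q ≤ H) : P = Q :=
  have := Sylow.unique_of_normal (P.subtype hP) inferInstance
  Sylow.subtype_injective (Subsingleton.elim (P.subtype hP) (Q.subtype hQ))

theorem stmt_1 {G : Type*} [Group G] [Fintype G] {p : ℕ} (hp : p.Prime)
    (P : Sylow p G) (x : G) (hx : x ∈ P)
    (hP : IsMulCommutative (P : Subgroup G))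
    (hC : IsMulCommutative (Subgroup.centralizer {x})) :
    ∀ Q : Sylow p G, x ∈ Q → Q = P := by
  intro Q hxQ
  have := Fact.mk hp
  have hQ := P.isMulCommutative Q
  exact Sylow.eq_of_le_of_isMulCommutative (Subgroup.le_centralizer_singleton hxQ)
    (Subgroup.le_centralizer_singleton hx)
end

section
/- Let G be a finite group, p a prime, and N a normal p-subgroup of G. A p-element x ∈ G belongs to a unique Sylow p-subgroup of G if and only if the coset xN belongs to a unique Sylow p-subgroup of G/N. -/
/-!
A normal `p`-subgroup `N` lies in every Sylow `p`-subgroup, so `P ↦ P/N` is a bijection between the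
Sylow `p`-subgroups of `G` and those of `G ⧸ N` (surjective in general, injective because
`P` is recovered as the preimage of `P/N`), and `x ∈ P ↔ xN ∈ P/N`. Unique existence transfers
along this bijection.
-/

namespace Sylow

variable {G G' : Type*} [Group G] [Group G'] [Finite G] {p : ℕ} [Fact p.Prime]
  {f : G →* G'} (hf : Function.Surjective f)

theorem comap_mapSurjective (hker : IsPGroup p f.ker) (P : Sylow p G) :
    (P.mapSurjective hf : Subgroup G').comap f = P := by
  have : f.ker.Normal := f.normal_ker
  exact Subgroup.comap_map_eq_self (hker.le_sylow_of_normal P)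

theorem mem_mapSurjective_iff (hker : IsPGroup p f.ker) (P : Sylow p G) (x : G) :
    f x ∈ P.mapSurjective hf ↔ x ∈ P :=
  SetLike.ext_iff.mp (comap_mapSurjective hf hker P) x

theorem mapSurjective_injective (hker : IsPGroup p f.ker) :
    Function.Injective (Sylow.mapSurjective hf : Sylow p G → Sylow p G') := by
  intro P Q h
  rw [Sylow.ext_iff, ← comap_mapSurjective hf hker P, h, comap_mapSurjective hf hker Q]

theorem mapSurjective_bijective (hker : IsPGroup p f.ker) :
    Function.Bijective (Sylow.mapSurjective hf : Sylow p G → Sylow p G') :=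
  ⟨mapSurjective_injective hf hker, mapSurjective_surjective hf p⟩

end Sylow

theorem stmt_4_general {G : Type*} [Group G] [Fintype G] {p : ℕ} (hp : p.Prime)
    (N : Subgroup G) [N.Normal] (hN : IsPGroup p N)
    (x : G) :
    (∃! P : Sylow p G, x ∈ P) ↔
      ∃! Q : Sylow p (G ⧸ N), (x : G ⧸ N) ∈ Q := by
  have : Fact p.Prime := ⟨hp⟩
  have hker : IsPGroup p (QuotientGroup.mk' N).ker := by rwa [QuotientGroup.ker_mk']
  have hmk := QuotientGroup.mk'_surjective N
  exact (existsUnique_congr fun P => (Sylow.mem_mapSurjective_iff hmk hker P x).symm).trans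
    ((Sylow.mapSurjective_bijective hmk hker).existsUnique_iff
      (p := fun Q => (x : G ⧸ N) ∈ Q)).symm

theorem stmt_4 {G : Type*} [Group G] [Fintype G] {p : ℕ} (hp : p.Prime)
    (N : Subgroup G) [N.Normal] (hN : IsPGroup p N)
    (x : G) (hx : ∃ k : ℕ, orderOf x = p ^ k) :
    (∃! P : Sylow p G, x ∈ P) ↔
      ∃! Q : Sylow p (G ⧸ N), (x : G ⧸ N) ∈ Q :=
  stmt_4_general hp N hN x
end

section
/- Let G be a finite group, p a prime, and N a central subgroup of G of order prime to p. A p-element x ∈ G belongs to a unique Sylow p-subgroup of G if and only if xN belongs to a unique Sylow p-subgroup of G/N. -/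
/-!
Quotienting by `N` maps Sylow `p`-subgroups of `G` onto those of `G ⧸ N`, and for a `p`-element
`g` one has `g ∈ P ↔ gN ∈ PN/N`: writing `g = n * y` with `n ∈ N` and `y ∈ P`, the factor `n` is
central, so it is a product of commuting `p`-elements, hence a `p`-element of the `p'`-group `N`,
hence trivial. Applied to the elements of a Sylow subgroup, this makes the correspondence
`P ↦ PN/N` injective, so it is a bijection that respects membership of `x`.
-/

namespace Subgroup

variable {G : Type*} [Group G]

theorem normal_of_le_center {N : Subgroup G} (hN : N ≤ center G) : N.Normal :=
  ⟨fun n hn g => by simpa [mem_center_iff.1 (hN hn) g] using hn⟩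

theorem eq_one_of_pow_eq_one_of_coprime {H : Subgroup G} {n : ℕ} (hn : (Nat.card H).Coprime n)
    {a : G} (ha : a ∈ H) (h : a ^ n = 1) : a = 1 := by
  have : powCoprime hn ⟨a, ha⟩ = powCoprime hn 1 := by
    ext
    simp [h]
  simpa using congrArg Subtype.val ((powCoprime hn).injective this)

theorem mem_of_mk_mem_map_of_le_center {p : ℕ} (hp : p.Prime) {N : Subgroup G} [N.Normal]
    (hNc : N ≤ center G) (hNp : ¬ p ∣ Nat.card N) {P : Subgroup G} (hP : IsPGroup p P)
    {g : G} {k : ℕ} (hg : g ^ p ^ k = 1) (h : (g : G ⧸ N) ∈ P.map (QuotientGroup.mk' N)) :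
    g ∈ P := by
  have h' : g ∈ (P.map (QuotientGroup.mk' N)).comap (QuotientGroup.mk' N) := h
  rw [QuotientGroup.comap_map_mk', mem_sup_of_normal_left] at h'
  obtain ⟨n, hn, y, hy, rfl⟩ := h'
  have hcomm : Commute n y := (mem_center_iff.1 (hNc hn) y).symm
  obtain ⟨m, hm⟩ := hP ⟨y, hy⟩
  have hym : y ^ p ^ m = 1 := by simpa using congrArg Subtype.val hm
  have hnp : n ^ p ^ (k + m) = 1 :=
    calc n ^ p ^ (k + m) = (n * y) ^ p ^ (k + m) * (y ^ p ^ (k + m))⁻¹ := by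
          rw [hcomm.mul_pow, mul_inv_cancel_right]
      _ = 1 := by rw [pow_add, pow_mul, hg, pow_mul', hym, one_pow, one_pow, inv_one, one_mul]
  have hcop : (Nat.card N).Coprime (p ^ (k + m)) :=
    ((hp.coprime_iff_not_dvd.2 hNp).symm).pow_right _
  simpa [eq_one_of_pow_eq_one_of_coprime hcop hn hnp] using hy

end Subgroup

namespace Sylow

variable {G : Type*} [Group G] [Finite G] {p : ℕ} [Fact p.Prime] {N : Subgroup G} [N.Normal]

theorem mem_iff_mk_mem_mapSurjective (hNc : N ≤ Subgroup.center G) (hNp : ¬ p ∣ Nat.card N)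
    (P : Sylow p G) {g : G} {k : ℕ} (hg : g ^ p ^ k = 1) :
    g ∈ P ↔ (g : G ⧸ N) ∈ P.mapSurjective (QuotientGroup.mk'_surjective N) :=
  ⟨Subgroup.mem_map_of_mem _, Subgroup.mem_of_mk_mem_map_of_le_center Fact.out hNc hNp P.2 hg⟩

theorem mapSurjective_mk'_bijective (hNc : N ≤ Subgroup.center G) (hNp : ¬ p ∣ Nat.card N) :
    Function.Bijective
      (mapSurjective (QuotientGroup.mk'_surjective N) : Sylow p G → Sylow p (G ⧸ N)) := by
  have hle : ∀ {P Q : Sylow p G}, P.mapSurjective (QuotientGroup.mk'_surjective N) =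
      Q.mapSurjective (QuotientGroup.mk'_surjective N) → (P : Subgroup G) ≤ Q := by
    intro P Q h g hg
    obtain ⟨k, hk⟩ := P.2 ⟨g, hg⟩
    have hgk : g ^ p ^ k = 1 := by simpa using congrArg Subtype.val hk
    exact (mem_iff_mk_mem_mapSurjective hNc hNp Q hgk).2
      (h ▸ (mem_iff_mk_mem_mapSurjective hNc hNp P hgk).1 hg)
  exact ⟨fun P Q h => Sylow.ext (le_antisymm (hle h) (hle h.symm)), mapSurjective_surjective _ p⟩

end Sylow

theorem stmt_5 {G : Type*} [Group G] [Fintype G] {p : ℕ} (hp : p.Prime)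
    (N : Subgroup G) (hNc : N ≤ Subgroup.center G) (hNp : ¬ p ∣ Nat.card N)
    (x : G) (hx : ∃ k : ℕ, orderOf x = p ^ k) :
    letI : N.Normal :=
      ⟨fun n hn g => by
        have h := (Subgroup.mem_center_iff.mp (hNc hn)) g
        rw [h]
        simpa using hn⟩
    (∃! P : Sylow p G, x ∈ P) ↔
      ∃! Q : Sylow p (G ⧸ N), ((x : G ⧸ N) ∈ Q) := by
  have := Subgroup.normal_of_le_center hNc
  have : Fact p.Prime := ⟨hp⟩
  obtain ⟨k, hk⟩ := hx
  have hxk : x ^ p ^ k = 1 := hk ▸ pow_orderOf_eq_one x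
  exact (existsUnique_congr fun P => Sylow.mem_iff_mk_mem_mapSurjective hNc hNp P hxk).trans
    ((Sylow.mapSurjective_mk'_bijective hNc hNp).existsUnique_iff
      (p := fun Q => (x : G ⧸ N) ∈ Q)).symm
end

section
/- Let G be a finite group, p a prime, and x ∈ G a p-element. Then the subnormalizer Sub_G(x), defined as the subgroup generated by {g ∈ G : ⟨x⟩ is subnormal in ⟨g, x⟩}, equals the subgroup of G generated by the normalizers N_G(P) of all Sylow p-subgroups P of G that contain x. -/
/-!
If `⟨x⟩` is subnormal in `H = ⟨g, x⟩`, then the `p`-group `⟨x⟩` lies in every Sylow subgroup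
`S` of `H` (intersecting a Sylow subgroup down a subnormal chain keeps `p` prime to the index).
By the Frattini argument `H` is generated by the normalizers `N_H(S)`, and `N_G(S)` lies in the
join of the `N_G(P)`, `P ⊇ S` Sylow, by descending induction on `|S|`: the Sylow subgroups of
`N_G(S)` strictly contain `S` since normalizers grow in `p`-groups, so Frattini applies again.
Conversely, if `x ∈ P` and `g ∈ N_G(P)`, then `P ∩ ⟨g, x⟩` is a nilpotent normal subgroup of
`⟨g, x⟩` containing `x`, and every subgroup of a nilpotent group is subnormal.
-/

variable {G : Type*} [Group G]

/-- `A` is subnormal in `B`: there is a chain `A = s 0 ⊴ s 1 ⊴ ⋯ ⊴ s n = B`. -/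
def IsSubnormalIn (A B : Subgroup G) : Prop :=
  ∃ (n : ℕ) (s : ℕ → Subgroup G), s 0 = A ∧ s n = B ∧
    ∀ i < n, s i ≤ s (i + 1) ∧ ∀ g ∈ s (i + 1), ∀ a ∈ s i, g * a * g⁻¹ ∈ s i

/-- The subnormaliser `Sub_G(x)` of an element `x`. -/
def subnormalizer (x : G) : Subgroup G :=
  Subgroup.closure
    {g : G | IsSubnormalIn (Subgroup.zpowers x) (Subgroup.closure {g, x})}

open Subgroup

lemma Subgroup.le_normalizer_of_forall_conj_mem {H K : Subgroup G}
    (h : ∀ g ∈ K, ∀ a ∈ H, g * a * g⁻¹ ∈ H) : K ≤ normalizer (H : Set G) := by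
  intro g hg
  rw [mem_normalizer_iff]
  intro a
  refine ⟨h g hg a, fun ha => ?_⟩
  simpa [mul_assoc] using h g⁻¹ (inv_mem hg) _ ha

lemma isSubnormalIn_iff {A B : Subgroup G} :
    IsSubnormalIn A B ↔ A ≤ B ∧ (A.subgroupOf B).IsSubnormal := by
  constructor
  · rintro ⟨n, s, rfl, rfl, hs⟩
    -- freeze the chain after step `n`, so that it becomes a monotone sequence
    set t : ℕ → Subgroup G := fun i => s (min i n)
    have hstep : ∀ i, t i ≤ t (i + 1) ∧ t (i + 1) ≤ normalizer (t i : Set G) := by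
      intro i
      rcases lt_or_ge i n with hi | hi
      · simp only [t, min_eq_left hi.le, min_eq_left (Nat.succ_le_of_lt hi)]
        exact ⟨(hs i hi).1, le_normalizer_of_forall_conj_mem (hs i hi).2⟩
      · simp only [t, min_eq_right hi, min_eq_right (hi.trans i.le_succ)]
        exact ⟨le_rfl, le_normalizer⟩
    have ht : Monotone t := monotone_nat_of_le_succ fun i => (hstep i).1
    have h0n : t 0 ≤ t n := ht n.zero_le
    simp only [t, Nat.zero_min, min_self] at h0n
    refine ⟨h0n, IsSubnormal.isSubnormal_iff.mpr ⟨n, fun i => (t i).subgroupOf (s n),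
      fun i j hij => comap_mono (ht hij), fun i => ?_, by simp [t], by simp [t, subgroupOf_self]⟩⟩
    exact (normal_subgroupOf_iff_le_normalizer (comap_mono (hstep i).1)).mpr
      ((comap_mono (hstep i).2).trans (le_normalizer_comap _))
  · rintro ⟨hAB, h⟩
    obtain ⟨n, f, hf, hnorm, f0, fn⟩ := IsSubnormal.isSubnormal_iff.mp h
    refine ⟨n, fun i => (f i).map B.subtype, by simp [f0, map_subgroupOf_eq_of_le hAB],
      by dsimp only; rw [fn, ← MonoidHom.range_eq_map, range_subtype],
      fun i _ => ⟨map_mono (hf i.le_succ), fun g hg a ha => ?_⟩⟩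
    have hle := (normal_subgroupOf_iff_le_normalizer (hf i.le_succ)).mp (hnorm i)
    exact (mem_normalizer_iff.mp ((map_mono hle).trans (le_normalizer_map _) hg) a).mp ha

lemma Subgroup.IsSubnormal.of_normalizerCondition [Finite G] (hnc : NormalizerCondition G)
    (H : Subgroup G) : H.IsSubnormal := by
  induction H using WellFoundedGT.induction with
  | _ H ih =>
    rcases eq_or_ne H ⊤ with rfl | hH
    · exact .top
    · exact .step H _ le_normalizer (ih _ (hnc H hH.lt_top)) normal_in_normalizer

lemma Subgroup.IsSubnormal.of_le_normal [Finite G] {A K : Subgroup G} [K.Normal]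
    [Group.IsNilpotent K] (hAK : A ≤ K) : A.IsSubnormal :=
  .trans hAK (.of_normalizerCondition Group.normalizerCondition_of_isNilpotent _)
    (Normal.isSubnormal inferInstance)

lemma isSubnormalIn_of_le_of_le_normalizer [Finite G] {A K H : Subgroup G}
    [Group.IsNilpotent K] (hAK : A ≤ K) (hKH : K ≤ H) (hH : H ≤ normalizer (K : Set G)) :
    IsSubnormalIn A H := by
  refine isSubnormalIn_iff.mpr ⟨hAK.trans hKH, ?_⟩
  have : (K.subgroupOf H).Normal := (normal_subgroupOf_iff_le_normalizer hKH).mpr hH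
  have : Group.IsNilpotent (K.subgroupOf H) :=
    Group.nilpotent_of_mulEquiv (subgroupOfEquivOfLe hKH).symm
  exact IsSubnormal.of_le_normal (K := K.subgroupOf H) (comap_mono hAK)

lemma isSubnormalIn_zpowers_closure_of_mem_normalizer [Finite G] {P : Subgroup G}
    [Group.IsNilpotent P] {x g : G} (hxP : x ∈ P) (hg : g ∈ normalizer (P : Set G)) :
    IsSubnormalIn (zpowers x) (closure {g, x}) := by
  set H := closure ({g, x} : Set G)
  have hxH : x ∈ H := subset_closure (Set.mem_insert_of_mem g rfl)
  have hgH : g ∈ H := subset_closure (Set.mem_insert g {x})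
  have : Group.IsNilpotent (P ⊓ H : Subgroup G) :=
    Group.nilpotent_of_mulEquiv (subgroupOfEquivOfLe inf_le_left)
  refine isSubnormalIn_of_le_of_le_normalizer (K := P ⊓ H)
    (le_inf (zpowers_le.mpr hxP) (zpowers_le.mpr hxH)) inf_le_right ?_
  refine ((closure_le _).mpr ?_).trans inf_normalizer_le_normalizer_inf
  rintro y (rfl | rfl)
  · exact ⟨hg, le_normalizer hgH⟩
  · exact ⟨le_normalizer hxP, le_normalizer hxH⟩

-- `|N : H ⊓ N| = |H ⊔ N : H|` divides `|G : H|`; below this is read off from index identities.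
lemma Subgroup.relIndex_dvd_index_of_normal_right [Finite G] (H : Subgroup G) {N : Subgroup G}
    [N.Normal] : H.relIndex N ∣ H.index := by
  have key : H.relIndex N * N.index = N.relIndex H * H.index := by
    have h := relIndex_inf_mul_relIndex H N ⊤
    rwa [inf_top_eq, relIndex_top_right, relIndex_top_right,
      ← relIndex_mul_index inf_le_left, inf_relIndex_left] at h
  obtain ⟨c, hc⟩ : N.relIndex H ∣ N.index := by
    rw [← relIndex_sup_right]
    exact relIndex_dvd_index_of_le le_sup_right
  have hne : N.relIndex H ≠ 0 := index_ne_zero_of_finite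
  refine ⟨c, Nat.eq_of_mul_eq_mul_left (Nat.pos_of_ne_zero hne) ?_⟩
  rw [← key, hc]
  ring

section Sylow

variable {p : ℕ}

namespace Subgroup

def sylowNormalizerSup (p : ℕ) (A : Subgroup G) : Subgroup G :=
  ⨆ (P : Sylow p G) (_ : A ≤ P), normalizer ((P : Subgroup G) : Set G)

lemma sylowNormalizerSup_antitone : Antitone (sylowNormalizerSup (G := G) p) :=
  fun _ _ hAB => iSup₂_le fun P hBP => le_iSup₂_of_le P (hAB.trans hBP) le_rfl

lemma normalizer_sylow_le_sylowNormalizerSup {A : Subgroup G} (P : Sylow p G)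
    (hAP : A ≤ P) : normalizer (P : Set G) ≤ A.sylowNormalizerSup p :=
  le_iSup₂_of_le P hAP le_rfl

lemma lt_inf_normalizer_of_lt {Q P : Subgroup G} [Group.IsNilpotent P] (hQP : Q < P) :
    Q < P ⊓ normalizer (Q : Set G) := by
  have hQ' : Q.subgroupOf P < ⊤ := by
    rw [lt_top_iff_ne_top, Ne, subgroupOf_eq_top]
    exact hQP.not_ge
  have hlt := map_subtype_lt_map_subtype.mpr (Group.normalizerCondition_of_isNilpotent _ hQ')
  rw [map_subgroupOf_eq_of_le hQP.le] at hlt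
  refine hlt.trans_le (le_inf (map_subtype_le _) ?_)
  simpa only [map_subgroupOf_eq_of_le hQP.le] using
    le_normalizer_map (H := Q.subgroupOf P) P.subtype

variable [Fact p.Prime]

lemma IsSubnormal.not_dvd_relIndex_sylow [Finite G] {H : Subgroup G}
    (hH : H.IsSubnormal) (Q : Sylow p G) : ¬ p ∣ (Q : Subgroup G).relIndex H := by
  induction hH with
  | top => rw [relIndex_top_right]; exact Q.not_dvd_index
  | step H K hHK _ hN ih =>
    rw [← relIndex_subgroupOf hHK]
    exact fun h => ih (h.trans (relIndex_dvd_index_of_normal_right _))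

lemma IsSubnormal.le_sylow [Finite G] {H : Subgroup G} (hH : H.IsSubnormal)
    (hp : IsPGroup p H) (Q : Sylow p G) : H ≤ Q := by
  obtain ⟨k, hk⟩ := hp.exists_card_eq
  obtain ⟨m, -, hm⟩ :=
    (Nat.dvd_prime_pow Fact.out).mp (hk ▸ relIndex_dvd_card (Q : Subgroup G) H)
  cases m with
  | zero => exact relIndex_eq_one.mp hm
  | succ m => exact absurd (hm ▸ dvd_pow_self p m.succ_ne_zero) (hH.not_dvd_relIndex_sylow Q)

end Subgroup

-- Frattini's argument for the normal closure of a Sylow subgroup.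
lemma Sylow.eq_top_of_forall_normalizer_le [Fact p.Prime] [Finite G] {D : Subgroup G}
    (h : ∀ P : Sylow p G, normalizer (P : Set G) ≤ D) : D = ⊤ := by
  obtain ⟨P⟩ : Nonempty (Sylow p G) := inferInstance
  rw [eq_top_iff, ← Sylow.normalizer_sup_eq_top' (N := normalClosure (P : Set G)) P
    le_normalClosure]
  refine sup_le (h P) ((closure_le _).mpr fun a ha => ?_)
  obtain ⟨q, hq, hqa⟩ := Group.mem_conjugatesOfSet_iff.mp ha
  obtain ⟨c, rfl⟩ := isConj_iff.mp hqa
  have hmem : c * q * c⁻¹ ∈ ((c • P : Sylow p G) : Subgroup G) := by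
    rw [Sylow.coe_subgroup_smul]
    exact smul_mem_pointwise_smul q (MulAut.conj c) _ hq
  exact h (c • P) (le_normalizer hmem)

namespace Subgroup

variable [Fact p.Prime] [Finite G]

lemma le_of_forall_normalizer_map_sylow_le {K D : Subgroup G}
    (h : ∀ S : Sylow p K, normalizer ((S : Subgroup K).map K.subtype : Set G) ≤ D) : K ≤ D := by
  suffices D.subgroupOf K = ⊤ by rwa [subgroupOf_eq_top] at this
  refine Sylow.eq_top_of_forall_normalizer_le (p := p) fun S => ?_
  rw [subgroupOf, ← map_le_iff_le_comap]
  exact (le_normalizer_map _).trans (h S)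

lemma normalizer_le_sylowNormalizerSup {Q : Subgroup G} (hQ : IsPGroup p Q) :
    normalizer (Q : Set G) ≤ Q.sylowNormalizerSup p := by
  induction Q using WellFoundedGT.induction with
  | _ Q ih =>
  obtain ⟨P, hQP⟩ := hQ.exists_le_sylow
  rcases hQP.eq_or_lt with rfl | hQP
  · exact normalizer_sylow_le_sylowNormalizerSup P le_rfl
  set N := normalizer (Q : Set G)
  have : Group.IsNilpotent P := P.isPGroup'.isNilpotent
  have hQT : Q < (P : Subgroup G) ⊓ N := lt_inf_normalizer_of_lt hQP
  refine le_of_forall_normalizer_map_sylow_le (p := p) fun S => ?_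
  have hQN : IsPGroup p (Q.subgroupOf N) := hQ.comap_of_injective N.subtype N.subtype_injective
  have hQR : Q ≤ (S : Subgroup N).map N.subtype :=
    (map_subgroupOf_eq_of_le le_normalizer).symm.trans_le (map_mono (hQN.le_sylow_of_normal S))
  have hQR' : Q < (S : Subgroup N).map N.subtype := by
    refine hQR.lt_of_ne fun hQR => hQT.not_ge ?_
    have hST : (S : Subgroup N) ≤ ((P : Subgroup G) ⊓ N).subgroupOf N :=
      (map_le_iff_le_comap.mp hQR.ge).trans (comap_mono hQT.le)
    have hT : IsPGroup p (((P : Subgroup G) ⊓ N).subgroupOf N) :=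
      (P.isPGroup'.to_le inf_le_left).comap_of_injective N.subtype N.subtype_injective
    rw [hQR, ← S.is_maximal' hT hST, map_subgroupOf_eq_of_le inf_le_right]
  exact (ih _ hQR' (S.isPGroup'.map _)).trans (sylowNormalizerSup_antitone hQR)

lemma le_sylowNormalizerSup_of_isSubnormalIn {A H : Subgroup G} (hA : IsPGroup p A)
    (h : IsSubnormalIn A H) : H ≤ A.sylowNormalizerSup p := by
  obtain ⟨hAH, hsn⟩ := isSubnormalIn_iff.mp h
  refine le_of_forall_normalizer_map_sylow_le (p := p) fun S => ?_
  have hAS : A ≤ (S : Subgroup H).map H.subtype :=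
    (map_subgroupOf_eq_of_le hAH).symm.trans_le
      (map_mono (hsn.le_sylow (hA.comap_of_injective H.subtype H.subtype_injective) S))
  exact (normalizer_le_sylowNormalizerSup (S.isPGroup'.map _)).trans
    (sylowNormalizerSup_antitone hAS)

end Subgroup

end Sylow

theorem stmt_7 [Fintype G] {p : ℕ} (hp : p.Prime)
    (x : G) (hx : ∃ k : ℕ, orderOf x = p ^ k) :
    subnormalizer x =
      ⨆ (P : Sylow p G) (_ : x ∈ P), Subgroup.normalizer ((P : Subgroup G) : Set G) := by
  have := Fact.mk hp
  obtain ⟨k, hk⟩ := hx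
  have hxp : IsPGroup p (zpowers x) := .of_card (n := k) (by rw [Nat.card_zpowers, hk])
  have hsup : (zpowers x).sylowNormalizerSup p =
      ⨆ (P : Sylow p G) (_ : x ∈ P), normalizer ((P : Subgroup G) : Set G) := by
    simp only [sylowNormalizerSup, zpowers_le]
    rfl
  rw [← hsup]
  refine le_antisymm ((closure_le _).mpr fun g hg => ?_) (iSup₂_le fun P hxP g hg => ?_)
  · exact le_sylowNormalizerSup_of_isSubnormalIn hxp hg (subset_closure (Set.mem_insert g {x}))
  · have : Group.IsNilpotent P := P.isPGroup'.isNilpotent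
    exact subset_closure (isSubnormalIn_zpowers_closure_of_mem_normalizer (zpowers_le.mp hxP) hg)
end

section
/- Let G be a finite group, p a prime, and x ∈ G a p-element. Then x belongs to a unique Sylow p-subgroup of G if and only if Sub_G(x) = N_G(P) for some Sylow p-subgroup P of G containing x. -/
/-
If `P` is the only Sylow `p`-subgroup containing `x`, let `h` normalize a subgroup `K` with
`x ∈ K ≤ N(P)`. Then `K ≤ N(h⁻¹Ph)`, and the `p`-subgroup `⟨x⟩` of this Sylow normalizer lies in
`h⁻¹Ph`; by uniqueness `h⁻¹Ph = P`, i.e. `h ∈ N(P)`. Climbing a subnormal chain from `⟨x⟩`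
therefore never leaves `N(P)`, so `Sub_G(x) ≤ N(P)`.

Conversely `N(Q) ≤ Sub_G(x)` for every Sylow `Q ∋ x`, because `⟨x⟩` is subnormal in the
`p`-group `Q ∩ ⟨g, x⟩`, which is normal in `⟨g, x⟩` for `g ∈ N(Q)`. Hence if `Sub_G(x) = N(P)`,
every Sylow `Q ∋ x` lies in `N(P)` and so equals `P`.
-/

variable {G : Type*} [Group G]

open Subgroup

namespace Subgroup

theorem forall_conj_mem_iff_le_normalizer {H K : Subgroup G} :
    (∀ g ∈ K, ∀ a ∈ H, g * a * g⁻¹ ∈ H) ↔ K ≤ normalizer (H : Set G) := by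
  refine ⟨fun h g hg a => ⟨h g hg a, fun ha => ?_⟩,
    fun h g hg a => (mem_normalizer_iff.mp (h hg) a).mp⟩
  simpa [mul_assoc] using h g⁻¹ (inv_mem hg) _ ha

end Subgroup

namespace IsSubnormalIn

theorem refl (A : Subgroup G) : IsSubnormalIn A A :=
  ⟨0, fun _ => A, rfl, rfl, fun _ hi => absurd hi (Nat.not_lt_zero _)⟩

theorem cons {A A' B : Subgroup G} (hle : A ≤ A') (hnorm : A' ≤ normalizer (A : Set G))
    (h : IsSubnormalIn A' B) : IsSubnormalIn A B := by
  obtain ⟨n, s, hs0, hsn, hs⟩ := h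
  refine ⟨n + 1, fun i => if i = 0 then A else s (i - 1), by simp, by simp [hsn], ?_⟩
  rintro (_ | i) hi
  · simpa [hs0] using ⟨hle, forall_conj_mem_iff_le_normalizer.mpr hnorm⟩
  · simpa using hs i (by omega)

theorem snoc {A B C : Subgroup G} (h : IsSubnormalIn A B) (hle : B ≤ C)
    (hnorm : C ≤ normalizer (B : Set G)) : IsSubnormalIn A C := by
  obtain ⟨n, s, hs0, hsn, hs⟩ := h
  refine ⟨n + 1, fun i => if i ≤ n then s i else C, by simp [hs0], by simp, fun i hi => ?_⟩
  rcases Nat.lt_or_eq_of_le (Nat.lt_succ_iff.mp hi) with hlt | rfl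
  · simpa [hlt.le, Nat.succ_le_of_lt hlt] using hs i hlt
  · simpa [hsn] using ⟨hle, forall_conj_mem_iff_le_normalizer.mpr hnorm⟩

theorem map {H : Type*} [Group H] (f : G →* H) {A B : Subgroup G} (h : IsSubnormalIn A B) :
    IsSubnormalIn (A.map f) (B.map f) := by
  obtain ⟨n, s, rfl, rfl, hs⟩ := h
  refine ⟨n, fun i => (s i).map f, rfl, rfl, fun i hi => ⟨map_mono (hs i hi).1, ?_⟩⟩
  rintro _ ⟨g, hg, rfl⟩ _ ⟨a, ha, rfl⟩
  exact ⟨g * a * g⁻¹, (hs i hi).2 g hg a ha, by simp⟩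

theorem le_of_normalizer_le {A B N : Subgroup G} (h : IsSubnormalIn A B) (hA : A ≤ N)
    (hN : ∀ K : Subgroup G, A ≤ K → K ≤ N → normalizer (K : Set G) ≤ N) : B ≤ N := by
  obtain ⟨n, s, rfl, rfl, hs⟩ := h
  suffices ∀ i ≤ n, s 0 ≤ s i ∧ s i ≤ N from (this n le_rfl).2
  intro i hi
  induction i with
  | zero => exact ⟨le_rfl, hA⟩
  | succ i ih =>
    obtain ⟨h0i, hiN⟩ := ih (by omega)
    obtain ⟨hle, hnorm⟩ := hs i (by omega)
    exact ⟨h0i.trans hle, (forall_conj_mem_iff_le_normalizer.mp hnorm).trans (hN _ h0i hiN)⟩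

end IsSubnormalIn

theorem isSubnormalIn_top_of_normalizerCondition [Finite G] (hnc : NormalizerCondition G)
    (A : Subgroup G) : IsSubnormalIn A ⊤ := by
  induction A using WellFoundedGT.induction with
  | _ A ih =>
    rcases eq_or_ne A ⊤ with rfl | hA
    · exact .refl _
    · have hlt : A < normalizer (A : Set G) := hnc A (lt_top_iff_ne_top.mpr hA)
      exact (ih _ hlt).cons hlt.le le_rfl

theorem IsPGroup.isSubnormalIn [Finite G] {p : ℕ} [Fact p.Prime] {A B : Subgroup G}
    (hAB : A ≤ B) (hB : IsPGroup p B) : IsSubnormalIn A B := by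
  have : Group.IsNilpotent B := hB.isNilpotent
  simpa [subgroupOf_map_subtype, inf_eq_left.mpr hAB, ← MonoidHom.range_eq_map] using
    (isSubnormalIn_top_of_normalizerCondition Group.normalizerCondition_of_isNilpotent
      (A.subgroupOf B)).map B.subtype

theorem IsPGroup.le_sylow_of_le_normalizer {p : ℕ} {R : Subgroup G} (hR : IsPGroup p R)
    {P : Sylow p G} (hle : R ≤ normalizer (P : Set G)) : R ≤ P :=
  inf_eq_left.mp ((hR.inf_normalizer_sylow P).symm.trans (inf_eq_left.mpr hle))

namespace Sylow

variable {p : ℕ}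

theorem eq_of_le_normalizer {P Q : Sylow p G} (hle : (Q : Subgroup G) ≤ normalizer (P : Set G)) :
    Q = P :=
  Sylow.ext (Q.is_maximal' P.isPGroup' (Q.isPGroup'.le_sylow_of_le_normalizer hle)).symm

theorem le_normalizer_smul {P : Sylow p G} {K : Subgroup G} {g : G}
    (hK : K ≤ normalizer (P : Set G)) (hg : g⁻¹ ∈ normalizer (K : Set G)) :
    K ≤ normalizer ((g • P : Sylow p G) : Set G) := by
  intro k hk
  have hconj : g⁻¹ * k * g ∈ K := by simpa using (mem_normalizer_iff.mp hg k).mp hk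
  refine smul_eq_iff_mem_normalizer.mp ?_
  calc k • g • P = g • (g⁻¹ * k * g) • P := by simp [mul_smul]
    _ = g • P := by rw [smul_eq_iff_mem_normalizer.mpr (hK hconj)]

end Sylow

section Subnormalizer

open Sylow

variable {p : ℕ} {x : G}

theorem normalizer_le_normalizer_of_forall_mem_sylow_eq {P : Sylow p G}
    (huniq : ∀ Q : Sylow p G, x ∈ Q → Q = P) (hx : IsPGroup p (zpowers x)) {K : Subgroup G}
    (hxK : x ∈ K) (hK : K ≤ normalizer (P : Set G)) :
    normalizer (K : Set G) ≤ normalizer (P : Set G) := by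
  intro h hh
  have hxP : x ∈ h⁻¹ • P := hx.le_sylow_of_le_normalizer
    ((zpowers_le.mpr hxK).trans (le_normalizer_smul hK (by simpa using hh))) (mem_zpowers x)
  exact inv_mem_iff.mp (smul_eq_iff_mem_normalizer.mp (huniq _ hxP))

theorem subnormalizer_le_normalizer_of_forall_mem_sylow_eq {P : Sylow p G}
    (huniq : ∀ Q : Sylow p G, x ∈ Q → Q = P) (hx : IsPGroup p (zpowers x)) (hxP : x ∈ P) :
    subnormalizer x ≤ normalizer (P : Set G) :=
  (closure_le _).mpr fun _ hg =>
    hg.le_of_normalizer_le (zpowers_le.mpr (le_normalizer hxP))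
      (fun _ hxK hK => normalizer_le_normalizer_of_forall_mem_sylow_eq huniq hx
        (zpowers_le.mp hxK) hK)
      (Subgroup.subset_closure (by simp))

theorem normalizer_le_subnormalizer [Finite G] [Fact p.Prime] {Q : Sylow p G} (hxQ : x ∈ Q) :
    normalizer (Q : Set G) ≤ subnormalizer x := by
  intro g hg
  apply Subgroup.subset_closure
  set H := closure ({g, x} : Set G)
  have hxH : x ∈ H := Subgroup.subset_closure (by simp)
  have hHQ : H ≤ normalizer (Q : Set G) := by
    rw [closure_le, Set.insert_subset_iff, Set.singleton_subset_iff]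
    exact ⟨hg, le_normalizer hxQ⟩
  have hxQH : IsSubnormalIn (zpowers x) ((Q : Subgroup G) ⊓ H) :=
    (Q.isPGroup'.to_le inf_le_left).isSubnormalIn (zpowers_le.mpr ⟨hxQ, hxH⟩)
  exact hxQH.snoc inf_le_right ((le_inf hHQ le_normalizer).trans inf_normalizer_le_normalizer_inf)

end Subnormalizer

theorem stmt_8 [Fintype G] {p : ℕ} (hp : p.Prime)
    (x : G) (hx : ∃ k : ℕ, orderOf x = p ^ k) :
    (∃! P : Sylow p G, x ∈ P) ↔
      ∃ P : Sylow p G, x ∈ P ∧ subnormalizer x = Subgroup.normalizer ((P : Subgroup G) : Set G) := by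
  have : Fact p.Prime := ⟨hp⟩
  obtain ⟨k, hk⟩ := hx
  have hxp : IsPGroup p (zpowers x) := IsPGroup.of_card (by rw [Nat.card_zpowers, hk])
  constructor
  · rintro ⟨P, hxP, huniq⟩
    exact ⟨P, hxP, le_antisymm (subnormalizer_le_normalizer_of_forall_mem_sylow_eq huniq hxp hxP)
      (normalizer_le_subnormalizer hxP)⟩
  · rintro ⟨P, hxP, hP⟩
    refine ⟨P, hxP, fun Q hxQ => Sylow.eq_of_le_normalizer ?_⟩
    exact le_normalizer.trans (hP ▸ normalizer_le_subnormalizer hxQ)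
end

section
/- Let G be a finite group, p a prime, P a Sylow p-subgroup of G, and x ∈ P. Then the subnormalizer Sub_G(x) is generated by the set of elements g ∈ G such that xᵍ ∈ P. -/
variable {G : Type*} [Group G]

/-!
Along a subnormal series `⟨x⟩ = s₀ ⊴ s₁ ⊴ ⋯ ⊴ sₙ = ⟨g, x⟩`, a `p`-subgroup `K ⊴ sᵢ`
containing `x` can be replaced by the join of its `sᵢ₊₁`-conjugates: these are normal
`p`-subgroups of `sᵢ`, so the join is again a `p`-group. Hence `x` and `g⁻¹ x g` lie in a
common Sylow subgroup `h • P`, and `g = (g h) h⁻¹` with both factors conjugating `x` into `P`.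

Conversely, the normaliser of a `p`-subgroup `R ∋ x` lies in `Sub_G(x)`, since `⟨x⟩` is
subnormal in the nilpotent group `R ⊓ ⟨h, x⟩`, which is normal in `⟨h, x⟩`. So every Sylow
subgroup containing `x` is a Sylow subgroup of `Sub_G(x)`, any two of them are conjugate in
`Sub_G(x)`, and if `x ∈ g • P` then `g` differs from such a conjugating element by an element
of `N_G(P) ≤ Sub_G(x)`.
-/

open Subgroup

theorem forall_conj_mem_iff_le_normalizer {A B : Subgroup G} (hAB : A ≤ B) :
    (∀ g ∈ B, ∀ a ∈ A, g * a * g⁻¹ ∈ A) ↔ B ≤ normalizer A := by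
  rw [← normal_subgroupOf_iff_le_normalizer hAB, normal_subgroupOf_iff hAB]
  exact ⟨fun h a g ha hg => h g hg a ha, fun h g hg a ha => h a g ha hg⟩

namespace IsSubnormalIn

theorem of_le_normalizer_left {A B C : Subgroup G} (hAB : A ≤ B) (hBA : B ≤ normalizer A)
    (h : IsSubnormalIn B C) : IsSubnormalIn A C := by
  obtain ⟨n, s, h0, hn, hs⟩ := h
  refine ⟨n + 1, fun i => Nat.casesOn i A s, rfl, hn, fun i hi => ?_⟩
  cases i with
  | zero =>
    rw [← h0] at hAB hBA
    exact ⟨hAB, (forall_conj_mem_iff_le_normalizer hAB).2 hBA⟩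
  | succ i => exact hs i (by omega)

theorem trans_le_normalizer {A B C : Subgroup G} (h : IsSubnormalIn A B) (hBC : B ≤ C)
    (hCB : C ≤ normalizer B) : IsSubnormalIn A C := by
  obtain ⟨n, s, h0, hn, hs⟩ := h
  refine ⟨n + 1, fun i => if i ≤ n then s i else C, by simpa using h0, by simp, fun i hi => ?_⟩
  obtain hi | rfl := Nat.lt_succ_iff_lt_or_eq.1 hi
  · simpa [hi.le, Nat.succ_le_of_lt hi] using hs i hi
  · simp only [le_refl, if_true, Nat.not_succ_le_self, if_false, hn]
    exact ⟨hBC, (forall_conj_mem_iff_le_normalizer hBC).2 hCB⟩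

end IsSubnormalIn

theorem isSubnormalIn_of_isNilpotent [Finite G] {A R : Subgroup G} [Group.IsNilpotent R]
    (hAR : A ≤ R) : IsSubnormalIn A R := by
  induction A using WellFoundedGT.induction with
  | ind A ih =>
    obtain rfl | hne := eq_or_ne A R
    · exact .refl A
    have hlt : A.subgroupOf R < ⊤ := by
      rw [lt_top_iff_ne_top, Ne, subgroupOf_eq_top]
      exact fun h => hne (le_antisymm hAR h)
    obtain ⟨y, hyN, hyA⟩ := SetLike.exists_of_lt (Group.normalizerCondition_of_isNilpotent _ hlt)
    rw [← subgroupOf_normalizer_eq hAR, mem_subgroupOf] at hyN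
    have hA : A < normalizer A ⊓ R :=
      lt_of_le_of_ne (le_inf le_normalizer hAR) fun h => hyA (h ▸ ⟨hyN, y.2⟩ : (y : G) ∈ A)
    exact (ih _ hA inf_le_right).of_le_normalizer_left hA.le inf_le_left

def normalClosureIn (K B : Subgroup G) : Subgroup G :=
  ⨆ b : B, K.map (MulAut.conj (b : G))

theorem le_normalClosureIn (K B : Subgroup G) : K ≤ normalClosureIn K B := by
  refine le_trans (le_of_eq ?_) (le_iSup _ (1 : B))
  ext; simp

theorem normalClosureIn_le {K B N : Subgroup G} (hKN : K ≤ N) (hBN : B ≤ normalizer N) :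
    normalClosureIn K B ≤ N :=
  iSup_le fun b => (map_mono hKN).trans (mem_normalizer_iff_map_conj_eq.1 (hBN b.2)).le

theorem le_normalizer_normalClosureIn (K B : Subgroup G) :
    B ≤ normalizer (normalClosureIn K B) := by
  intro c hc
  let f : B → Subgroup G := fun b => K.map (MulAut.conj (b : G))
  have hf : ∀ b : B, (f b).map (MulAut.conj c) = f (⟨c, hc⟩ * b) := by
    intro b
    ext; simp [f, mul_assoc]
  rw [mem_normalizer_iff_map_conj_eq, normalClosureIn, Subgroup.map_iSup]
  change ⨆ b, (f b).map (MulAut.conj c) = ⨆ b, f b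
  simp_rw [hf]
  exact (Equiv.mulLeft (⟨c, hc⟩ : B)).iSup_comp (g := f)

theorem IsPGroup.normalClosureIn {p : ℕ} {K N B : Subgroup G}
    (hK : IsPGroup p K) (hKN : K ≤ N) (hNK : N ≤ normalizer K) (hBN : B ≤ normalizer N) :
    IsPGroup p (normalClosureIn K B) := by
  let F : B → Subgroup N := fun b => (K.map (MulAut.conj (b : G))).subgroupOf N
  have hconj : ∀ b : B, N.map (MulAut.conj (b : G)) = N :=
    fun b => mem_normalizer_iff_map_conj_eq.1 (hBN b.2)
  have hle : ∀ b : B, K.map (MulAut.conj (b : G)) ≤ N :=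
    fun b => (map_mono hKN).trans (hconj b).le
  have : ∀ b, (F b).Normal := fun b => (normal_subgroupOf_iff_le_normalizer (hle b)).2 <| by
    rw [← hconj b]
    exact (map_mono hNK).trans (le_normalizer_map _)
  have hF : IsPGroup p ↥(⨆ b, F b) :=
    Sylow.iSup_of_normal F fun b => (hK.map _).comap_of_injective N.subtype Subtype.coe_injective
  have := hF.map N.subtype
  rwa [Subgroup.map_iSup, funext fun b => map_subgroupOf_eq_of_le (hle b)] at this

theorem IsSubnormalIn.exists_isPGroup {p : ℕ} {A B : Subgroup G} (h : IsSubnormalIn A B)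
    (hA : IsPGroup p A) :
    ∃ K : Subgroup G, A ≤ K ∧ K ≤ B ∧ B ≤ normalizer K ∧ IsPGroup p K := by
  obtain ⟨n, s, rfl, rfl, hs⟩ := h
  induction n with
  | zero => exact ⟨s 0, le_rfl, le_rfl, le_normalizer, hA⟩
  | succ n ih =>
    obtain ⟨K, hAK, hKs, hsK, hK⟩ := ih fun i hi => hs i (by omega)
    obtain ⟨hle, hconj⟩ := hs n (by omega)
    have hnorm := (forall_conj_mem_iff_le_normalizer hle).1 hconj
    exact ⟨normalClosureIn K (s (n + 1)), hAK.trans (le_normalClosureIn _ _),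
      (normalClosureIn_le hKs hnorm).trans hle, le_normalizer_normalClosureIn _ _,
      hK.normalClosureIn hKs hsK hnorm⟩

theorem exists_sylow_mem_of_isSubnormalIn {p : ℕ} {x g : G} (hx : IsPGroup p (zpowers x))
    (h : IsSubnormalIn (zpowers x) (closure {g, x})) :
    ∃ Q : Sylow p G, x ∈ Q ∧ g⁻¹ * x * g ∈ Q := by
  obtain ⟨K, hxK, -, hK, hKp⟩ := h.exists_isPGroup hx
  obtain ⟨Q, hKQ⟩ := hKp.exists_le_sylow
  have hg : g⁻¹ ∈ normalizer K := inv_mem (hK (Subgroup.subset_closure (by simp)))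
  have hxK' : x ∈ K := hxK (mem_zpowers x)
  refine ⟨Q, hKQ hxK', hKQ ?_⟩
  simpa using (mem_normalizer_iff.1 hg x).1 hxK'

theorem Sylow.mem_smul_iff {p : ℕ} {P : Sylow p G} {g x : G} : x ∈ g • P ↔ g⁻¹ * x * g ∈ P := by
  change x ∈ ((g • P : Sylow p G) : Subgroup G) ↔ _
  rw [Sylow.coe_subgroup_smul, mem_pointwise_smul_iff_inv_smul_mem]
  simp only [MulAut.smul_def, MulAut.conj_symm_apply, MulAut.inv_def, mul_assoc]
  rfl

section Sylow

variable [Finite G] {p : ℕ} [Fact p.Prime]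

theorem normalizer_le_subnormalizer_s9 {R : Subgroup G} (hR : IsPGroup p R) {x : G}
    (hx : x ∈ R) : normalizer R ≤ subnormalizer x := by
  intro h hh
  apply Subgroup.subset_closure
  set H := closure {h, x}
  have hHR : H ≤ normalizer R := (Subgroup.closure_le _).2 <| by
    rintro _ (rfl | rfl)
    exacts [hh, le_normalizer hx]
  have hxH : x ∈ H := Subgroup.subset_closure (by simp)
  have : Group.IsNilpotent ↥(R ⊓ H) := (hR.to_le inf_le_left).isNilpotent
  refine (isSubnormalIn_of_isNilpotent (zpowers_le.2 (mem_inf.2 ⟨hx, hxH⟩))).trans_le_normalizer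
    inf_le_right ?_
  refine (forall_conj_mem_iff_le_normalizer inf_le_right).1 fun g hg a ha => ?_
  exact ⟨(mem_normalizer_iff.1 (hHR hg) a).1 ha.1, H.mul_mem (H.mul_mem hg ha.2) (H.inv_mem hg)⟩

theorem Sylow.le_subnormalizer (P : Sylow p G) {x : G} (hx : x ∈ P) :
    (P : Subgroup G) ≤ subnormalizer x :=
  le_normalizer.trans (normalizer_le_subnormalizer_s9 P.isPGroup' hx)

theorem Sylow.mem_subnormalizer_of_mem_smul {P : Sylow p G} {x g : G}
    (hx : x ∈ P) (hgx : x ∈ g • P) : g ∈ subnormalizer x := by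
  obtain ⟨s, hs⟩ := MulAction.exists_smul_eq (subnormalizer x)
    (P.subtype (P.le_subnormalizer hx)) ((g • P).subtype ((g • P).le_subnormalizer hgx))
  rw [Sylow.smul_subtype] at hs
  have hN : (s : G)⁻¹ * g ∈ normalizer (P : Subgroup G) :=
    Sylow.smul_eq_iff_mem_normalizer.1 <| by
      rw [mul_smul, ← Sylow.subtype_injective hs]
      exact inv_smul_smul (s : G) P
  simpa using mul_mem s.2 (normalizer_le_subnormalizer_s9 P.isPGroup' hx hN)

theorem Sylow.mem_closure_setOf_conj_mem (P Q : Sylow p G) {x g : G} (hx : x ∈ Q)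
    (hgx : g⁻¹ * x * g ∈ Q) : g ∈ closure {g : G | g⁻¹ * x * g ∈ P} := by
  obtain ⟨h, rfl⟩ := MulAction.exists_smul_eq G P Q
  rw [Sylow.mem_smul_iff] at hx hgx
  have hgh : g * h ∈ closure {g : G | g⁻¹ * x * g ∈ P} :=
    Subgroup.subset_closure (by simpa [mul_assoc] using hgx)
  have hh : h ∈ closure {g : G | g⁻¹ * x * g ∈ P} := Subgroup.subset_closure hx
  simpa using mul_mem hgh (inv_mem hh)

end Sylow

theorem stmt_9 [Fintype G] {p : ℕ} (hp : p.Prime)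
    (P : Sylow p G) (x : G) (hx : x ∈ P) :
    subnormalizer x = Subgroup.closure {g : G | g⁻¹ * x * g ∈ P} := by
  have := Fact.mk hp
  have hxp : IsPGroup p (zpowers x) := P.isPGroup'.to_le (zpowers_le.2 hx)
  refine le_antisymm ((Subgroup.closure_le _).2 fun g hg => ?_)
    ((Subgroup.closure_le _).2 fun g hg => ?_)
  · obtain ⟨Q, hxQ, hgQ⟩ := exists_sylow_mem_of_isSubnormalIn hxp hg
    exact P.mem_closure_setOf_conj_mem Q hxQ hgQ
  · exact Sylow.mem_subnormalizer_of_mem_smul hx (Sylow.mem_smul_iff.2 hg)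
end
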